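/- Let A be a positive operator on H and T, S A-bounded operators with TS = ST. Then r_A(TS) ≤ ½(ω_A(TS) + ‖T‖_A^{1/2} ‖S‖_A^{1/2} ‖TS‖_A^{1/2}) and r_A(TS) ≤ ½(ω_A(TS) + min{‖T‖_A ‖S²‖_A^{1/2}, ‖T²‖_A^{1/2} ‖S‖_A}). -/

import Mathlib

/-!
Write `A = B⋆B`. On `range B` the seminorm `‖·‖_A` is the Hilbert norm `‖B x‖`, and an
`A`-bounded `Y` descends to a bounded operator `B x ↦ B (Y x)` there; extend it to an operator `W`
on the completion. Then `‖Y ^ n‖_A ≤ ‖W ^ n‖` and the numerical range of `W` is bounded by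
`ω_A(Y)`, so Gelfand's formula gives `r_A(Y) ≤ r(W) ≤ ω_A(Y)`. On the other hand
`r_A(TS) ≤ ‖(TS)²‖_A^{1/2}`, and submultiplicativity bounds `‖(TS)²‖_A` by
`‖T‖_A ‖S‖_A ‖TS‖_A`, and, since `(TS)² = T²S²`, by `‖T‖_A² ‖S²‖_A` and by `‖T²‖_A ‖S‖_A²`.
Averaging the two upper bounds for `r_A(TS)` gives both inequalities.
-/

open ContinuousLinearMap

variable {H : Type*} [NormedAddCommGroup H] [InnerProductSpace ℂ H] [CompleteSpace H]

/-- The seminorm `‖x‖_A = ‖A^{1/2} x‖ = √⟨Ax, x⟩` induced by a positive operator `A`. -/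
noncomputable def anorm (A : H →L[ℂ] H) (x : H) : ℝ :=
  Real.sqrt (A.reApplyInnerSelf x)

/-- `T` is `A`-bounded: `‖Tx‖_A ≤ c ‖x‖_A` for some `c > 0`. -/
def ABounded (A T : H →L[ℂ] H) : Prop :=
  ∃ c : ℝ, 0 < c ∧ ∀ x : H, anorm A (T x) ≤ c * anorm A x

/-- The operator seminorm `‖T‖_A`: the least `c ≥ 0` with `‖Tx‖_A ≤ c ‖x‖_A` for all `x`. -/
noncomputable def aNorm (A T : H →L[ℂ] H) : ℝ :=
  sInf {c : ℝ | 0 ≤ c ∧ ∀ x : H, anorm A (T x) ≤ c * anorm A x}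

/-- The `A`-spectral radius `r_A(T) = inf_{n ≥ 1} ‖T^n‖_A^{1/n}`. -/
noncomputable def aSpecRad (A T : H →L[ℂ] H) : ℝ :=
  ⨅ n : ℕ+, aNorm A (T ^ (n : ℕ)) ^ ((n : ℝ)⁻¹)

/-- The `A`-numerical radius `ω_A(T) = sup {|⟨ATx, x⟩| : ‖x‖_A = 1}`. -/
noncomputable def aNumRad (A T : H →L[ℂ] H) : ℝ :=
  sSup {c : ℝ | ∃ x : H, anorm A x = 1 ∧ c = ‖(inner ℂ (A (T x)) x : ℂ)‖}

open scoped InnerProductSpace ComplexConjugate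
open UniformSpace

section Hilbert

variable {K : Type*} [NormedAddCommGroup K] [InnerProductSpace ℂ K] [CompleteSpace K]

theorem spectralRadius_le_of_norm_inner_le (W : K →L[ℂ] K) {M : ℝ} (hM : 0 ≤ M)
    (h : ∀ u, ‖⟪W u, u⟫_ℂ‖ ≤ M * ‖u‖ ^ 2) : spectralRadius ℂ W ≤ ENNReal.ofReal M := by
  refine iSup₂_le fun z hz => ?_
  by_contra! hMz
  rw [← ENNReal.ofReal_coe_nnreal, coe_nnnorm, ENNReal.ofReal_lt_ofReal_iff_of_nonneg hM] at hMz
  have hgap : 0 < ‖z‖ - M := sub_pos.2 hMz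
  refine spectrum.mem_iff.mp hz <| isUnit_of_forall_le_norm_inner_map _
    (c := ⟨‖z‖ - M, hgap.le⟩) (by exact_mod_cast hgap) fun u => ?_
  have hz_inner : ⟪(algebraMap ℂ (K →L[ℂ] K) z - W) u, u⟫_ℂ =
      conj z * ⟪u, u⟫_ℂ - ⟪W u, u⟫_ℂ := by
    simp [Algebra.algebraMap_eq_smul_one, mul_comm]
  have hz_norm : ‖conj z * ⟪u, u⟫_ℂ‖ = ‖z‖ * ‖u‖ ^ 2 := by
    simp [inner_self_eq_norm_sq_to_K]
  calc ‖u‖ ^ 2 * (‖z‖ - M) ≤ ‖conj z * ⟪u, u⟫_ℂ‖ - ‖⟪W u, u⟫_ℂ‖ := by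
        rw [hz_norm]; nlinarith [h u]
    _ ≤ _ := hz_inner ▸ norm_sub_norm_le _ _

end Hilbert

theorem ofReal_le_spectralRadius_of_forall_le_norm_pow {𝓐 : Type*} [NormedRing 𝓐]
    [NormedAlgebra ℂ 𝓐] [CompleteSpace 𝓐] (a : 𝓐) {x : ℝ}
    (h : ∀ n : ℕ, 0 < n → x ≤ ‖a ^ n‖ ^ (n : ℝ)⁻¹) :
    ENNReal.ofReal x ≤ spectralRadius ℂ a := by
  refine ge_of_tendsto (spectrum.pow_nnnorm_pow_one_div_tendsto_nhds_spectralRadius a) ?_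
  filter_upwards [Filter.eventually_gt_atTop 0] with n hn
  rw [← ENNReal.coe_rpow_of_nonneg _ (by positivity), one_div, ← ENNReal.ofReal_coe_nnreal,
    NNReal.coe_rpow, coe_nnnorm]
  exact ENNReal.ofReal_le_ofReal (h n hn)

section Descend

variable {𝕜 E F : Type*} [NontriviallyNormedField 𝕜] [AddCommGroup E] [Module 𝕜 E]
  [NormedAddCommGroup F] [NormedSpace 𝕜 F]

theorem exists_completion_range_intertwining (B : E →ₗ[𝕜] F) (Z : E →ₗ[𝕜] E) {c : ℝ}
    (hZ : ∀ x, ‖B (Z x)‖ ≤ c * ‖B x‖) :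
    ∃ W : Completion (LinearMap.range B) →L[𝕜] Completion (LinearMap.range B),
      ∀ x, W (B.rangeRestrict x) = B.rangeRestrict (Z x) := by
  have hker : LinearMap.ker B ≤ LinearMap.ker (B.rangeRestrict ∘ₗ Z) := fun x hx => by
    simpa [LinearMap.mem_ker.1 hx] using hZ x
  let V : LinearMap.range B →ₗ[𝕜] LinearMap.range B :=
    (LinearMap.ker B).liftQ (B.rangeRestrict ∘ₗ Z) hker ∘ₗ B.quotKerEquivRange.symm.toLinearMap
  have hV : ∀ x, V (B.rangeRestrict x) = B.rangeRestrict (Z x) := fun x =>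
    congrArg ((LinearMap.ker B).liftQ _ hker) (B.quotKerEquivRange_symm_apply_image x _)
  refine ⟨(V.mkContinuous c fun d => ?_).completion, fun x => ?_⟩
  · obtain ⟨x, rfl⟩ := B.surjective_rangeRestrict d
    rw [hV]
    exact hZ x
  · simp [hV]

end Descend

section ASeminorm

variable {E : Type*} [NormedAddCommGroup E] [InnerProductSpace ℂ E] {A B Z : E →L[ℂ] E}

theorem inner_apply_eq_inner_of_star_mul_self [CompleteSpace E] (hB : star B * B = A) (x y : E) :
    ⟪A x, y⟫_ℂ = ⟪B x, B y⟫_ℂ := by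
  rw [← hB]
  exact adjoint_inner_left B y (B x)

theorem anorm_eq_norm_of_star_mul_self [CompleteSpace E] (hB : star B * B = A) (x : E) :
    anorm A x = ‖B x‖ := by
  rw [anorm, reApplyInnerSelf, inner_apply_eq_inner_of_star_mul_self hB, inner_self_eq_norm_sq,
    Real.sqrt_sq (norm_nonneg _)]

theorem anorm_nonneg (A : E →L[ℂ] E) (x : E) : 0 ≤ anorm A x := Real.sqrt_nonneg _

theorem aNorm_nonneg (A Z : E →L[ℂ] E) : 0 ≤ aNorm A Z := Real.sInf_nonneg fun _ h => h.1

theorem aNorm_le {c : ℝ} (hc : 0 ≤ c) (h : ∀ x, anorm A (Z x) ≤ c * anorm A x) :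
    aNorm A Z ≤ c :=
  csInf_le ⟨0, fun _ h => h.1⟩ ⟨hc, h⟩

theorem anorm_apply_le_aNorm_mul (hZ : ABounded A Z) (x : E) :
    anorm A (Z x) ≤ aNorm A Z * anorm A x := by
  obtain ⟨c, hc, hZc⟩ := hZ
  rcases (anorm_nonneg A x).eq_or_lt with hx | hx
  · simpa [← hx] using hZc x
  · rw [← div_le_iff₀ hx]
    exact le_csInf ⟨c, hc.le, hZc⟩ fun c' hc' => (div_le_iff₀ hx).2 (hc'.2 x)

theorem ABounded.mul {Z' : E →L[ℂ] E} (hZ : ABounded A Z) (hZ' : ABounded A Z') :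
    ABounded A (Z * Z') := by
  obtain ⟨c, hc, hZc⟩ := hZ
  obtain ⟨c', hc', hZc'⟩ := hZ'
  refine ⟨c * c', mul_pos hc hc', fun x => ?_⟩
  calc anorm A (Z (Z' x)) ≤ c * anorm A (Z' x) := hZc _
    _ ≤ c * (c' * anorm A x) := by gcongr; exact hZc' x
    _ = c * c' * anorm A x := by ring

theorem aNorm_mul_le {Z' : E →L[ℂ] E} (hZ : ABounded A Z) (hZ' : ABounded A Z') :
    aNorm A (Z * Z') ≤ aNorm A Z * aNorm A Z' := by
  refine aNorm_le (mul_nonneg (aNorm_nonneg A Z) (aNorm_nonneg A Z')) fun x => ?_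
  calc anorm A (Z (Z' x)) ≤ aNorm A Z * anorm A (Z' x) := anorm_apply_le_aNorm_mul hZ _
    _ ≤ aNorm A Z * (aNorm A Z' * anorm A x) := by
        gcongr
        · exact aNorm_nonneg A Z
        · exact anorm_apply_le_aNorm_mul hZ' x
    _ = aNorm A Z * aNorm A Z' * anorm A x := by ring

theorem ABounded.pow (hZ : ABounded A Z) (n : ℕ) : ABounded A (Z ^ n) := by
  induction n with
  | zero => exact ⟨1, one_pos, fun x => by simp⟩
  | succ n ih => rw [pow_succ]; exact ih.mul hZ

theorem aNorm_pow_le (hZ : ABounded A Z) (n : ℕ) : aNorm A (Z ^ n) ≤ aNorm A Z ^ n := by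
  induction n with
  | zero => exact aNorm_le zero_le_one fun x => by simp
  | succ n ih =>
    rw [pow_succ, pow_succ]
    exact (aNorm_mul_le (hZ.pow n) hZ).trans
      (mul_le_mul_of_nonneg_right ih (aNorm_nonneg A Z))

theorem aNumRad_nonneg (A Z : E →L[ℂ] E) : 0 ≤ aNumRad A Z :=
  Real.sSup_nonneg fun _ ⟨_, _, hc⟩ => hc ▸ norm_nonneg _

theorem norm_inner_le_aNumRad_mul [CompleteSpace E] (hB : star B * B = A) (hZ : ABounded A Z)
    (x : E) :
    ‖⟪A (Z x), x⟫_ℂ‖ ≤ aNumRad A Z * anorm A x ^ 2 := by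
  have hCS : ∀ y, ‖⟪A (Z y), y⟫_ℂ‖ ≤ aNorm A Z * anorm A y ^ 2 := fun y => by
    rw [inner_apply_eq_inner_of_star_mul_self hB]
    calc ‖⟪B (Z y), B y⟫_ℂ‖ ≤ anorm A (Z y) * anorm A y := by
          simpa only [anorm_eq_norm_of_star_mul_self hB] using norm_inner_le_norm _ _
      _ ≤ aNorm A Z * anorm A y * anorm A y := by
          gcongr
          · exact anorm_nonneg A y
          · exact anorm_apply_le_aNorm_mul hZ y
      _ = aNorm A Z * anorm A y ^ 2 := by ring
  rcases (anorm_nonneg A x).eq_or_lt with hx | hx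
  · simpa [← hx] using hCS x
  have hu : anorm A (((anorm A x)⁻¹ : ℂ) • x) = 1 := by
    rw [anorm_eq_norm_of_star_mul_self hB, map_smul, norm_smul,
      ← anorm_eq_norm_of_star_mul_self hB]
    simp [abs_of_pos hx, hx.ne']
  have hsmul : ‖⟪A (Z (((anorm A x)⁻¹ : ℂ) • x)), ((anorm A x)⁻¹ : ℂ) • x⟫_ℂ‖ =
      ‖⟪A (Z x), x⟫_ℂ‖ / anorm A x ^ 2 := by
    simp only [map_smul, inner_smul_left, inner_smul_right, norm_mul, RCLike.norm_conj, norm_inv,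
      Complex.norm_real, Real.norm_eq_abs, abs_of_pos hx]
    ring
  have hle : ‖⟪A (Z x), x⟫_ℂ‖ / anorm A x ^ 2 ≤ aNumRad A Z := by
    refine hsmul ▸ le_csSup ⟨aNorm A Z, ?_⟩ ⟨_, hu, rfl⟩
    rintro _ ⟨y, hy, rfl⟩
    simpa [hy] using hCS y
  rwa [div_le_iff₀ (by positivity)] at hle

end ASeminorm

section ASpecRad

variable {E : Type*} [NormedAddCommGroup E] [InnerProductSpace ℂ E]

theorem aSpecRad_le_aNorm_pow_rpow (A Y : E →L[ℂ] E) (n : ℕ+) :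
    aSpecRad A Y ≤ aNorm A (Y ^ (n : ℕ)) ^ ((n : ℝ)⁻¹) :=
  ciInf_le ⟨0, by rintro _ ⟨m, rfl⟩; exact Real.rpow_nonneg (aNorm_nonneg _ _) _⟩ n

theorem aSpecRad_le_sqrt_aNorm_sq (A Y : E →L[ℂ] E) : aSpecRad A Y ≤ √(aNorm A (Y ^ 2)) := by
  simpa [Real.sqrt_eq_rpow, one_div] using aSpecRad_le_aNorm_pow_rpow A Y 2

theorem aSpecRad_le_aNumRad [CompleteSpace E] {A Y : E →L[ℂ] E} (hA : A.IsPositive)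
    (hY : ABounded A Y) :
    aSpecRad A Y ≤ aNumRad A Y := by
  obtain ⟨B, hB⟩ := CStarAlgebra.nonneg_iff_eq_star_mul_self.1 ((nonneg_iff_isPositive A).2 hA)
  replace hB := hB.symm
  set R := (B : E →ₗ[ℂ] E).rangeRestrict
  obtain ⟨c, -, hYc⟩ := id hY
  obtain ⟨W, hW⟩ := exists_completion_range_intertwining (B : E →ₗ[ℂ] E) (Y : E →ₗ[ℂ] E)
    (c := c) fun x => by simpa [anorm_eq_norm_of_star_mul_self hB] using hYc x
  have hWpow : ∀ n x, (W ^ n) (R x) = R ((Y ^ n) x) := by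
    intro n
    induction n with
    | zero => simp
    | succ n ih =>
      intro x
      rw [pow_succ, pow_succ]
      exact (congrArg (W ^ n) (hW x)).trans (ih (Y x))
  have hnorm : ∀ n, aNorm A (Y ^ n) ≤ ‖W ^ n‖ := fun n =>
    aNorm_le (norm_nonneg (W ^ n)) fun x => by
      rw [anorm_eq_norm_of_star_mul_self hB, anorm_eq_norm_of_star_mul_self hB]
      calc ‖B ((Y ^ n) x)‖ = ‖(W ^ n) (R x)‖ := by rw [hWpow, Completion.norm_coe]; rfl
        _ ≤ ‖W ^ n‖ * ‖(R x : Completion (LinearMap.range (B : E →ₗ[ℂ] E)))‖ := le_opNorm _ _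
        _ = ‖W ^ n‖ * ‖B x‖ := by rw [Completion.norm_coe]; rfl
  have hnum : ∀ u, ‖⟪W u, u⟫_ℂ‖ ≤ aNumRad A Y * ‖u‖ ^ 2 := by
    intro u
    induction u using Completion.induction_on with
    | hp => exact isClosed_le (by fun_prop) (by fun_prop)
    | ih d =>
      obtain ⟨x, rfl⟩ := (B : E →ₗ[ℂ] E).surjective_rangeRestrict d
      rw [hW, Completion.inner_coe, Completion.norm_coe]
      simpa [R, ← inner_apply_eq_inner_of_star_mul_self hB, anorm_eq_norm_of_star_mul_self hB]
        using norm_inner_le_aNumRad_mul hB hY x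
  have hsr := spectralRadius_le_of_norm_inner_le W (aNumRad_nonneg A Y) hnum
  refine (ENNReal.ofReal_le_ofReal_iff (aNumRad_nonneg A Y)).1 (le_trans ?_ hsr)
  exact ofReal_le_spectralRadius_of_forall_le_norm_pow W fun n hn =>
    (aSpecRad_le_aNorm_pow_rpow A Y ⟨n, hn⟩).trans
      (Real.rpow_le_rpow (aNorm_nonneg _ _) (hnorm n) (by positivity))

end ASpecRad

/-- for commuting `A`-bounded `T, S`, two refined bounds for `r_A(TS)`. -/
theorem stmt17 (A T S : H →L[ℂ] H) (hA : A.IsPositive)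
    (hT : ABounded A T) (hS : ABounded A S) (hc : T * S = S * T) :
    aSpecRad A (T * S) ≤
      (aNumRad A (T * S) +
        Real.sqrt (aNorm A T) * Real.sqrt (aNorm A S) * Real.sqrt (aNorm A (T * S))) / 2 ∧
    aSpecRad A (T * S) ≤
      (aNumRad A (T * S) +
        min (aNorm A T * Real.sqrt (aNorm A (S ^ 2)))
          (Real.sqrt (aNorm A (T ^ 2)) * aNorm A S)) / 2 := by
  have hT₀ := aNorm_nonneg A T
  have hS₀ := aNorm_nonneg A S
  have hω := aSpecRad_le_aNumRad hA (hT.mul hS)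
  have hsq := aSpecRad_le_sqrt_aNorm_sq A (T * S)
  have h₁ : aNorm A ((T * S) ^ 2) ≤ aNorm A T * aNorm A S * aNorm A (T * S) := by
    rw [sq, mul_assoc, mul_assoc (aNorm A T)]
    exact (aNorm_mul_le hT (hS.mul (hT.mul hS))).trans
      (mul_le_mul_of_nonneg_left (aNorm_mul_le hS (hT.mul hS)) hT₀)
  have h₂ : aNorm A ((T * S) ^ 2) ≤ aNorm A T ^ 2 * aNorm A (S ^ 2) := by
    rw [(Commute.mul_pow hc 2)]
    exact (aNorm_mul_le (hT.pow 2) (hS.pow 2)).trans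
      (mul_le_mul_of_nonneg_right (aNorm_pow_le hT 2) (aNorm_nonneg _ _))
  have h₃ : aNorm A ((T * S) ^ 2) ≤ aNorm A (T ^ 2) * aNorm A S ^ 2 := by
    rw [(Commute.mul_pow hc 2)]
    exact (aNorm_mul_le (hT.pow 2) (hS.pow 2)).trans
      (mul_le_mul_of_nonneg_left (aNorm_pow_le hS 2) (aNorm_nonneg _ _))
  replace h₁ := hsq.trans (Real.sqrt_le_sqrt h₁)
  replace h₂ := hsq.trans (Real.sqrt_le_sqrt h₂)
  replace h₃ := hsq.trans (Real.sqrt_le_sqrt h₃)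
  rw [Real.sqrt_mul (mul_nonneg hT₀ hS₀), Real.sqrt_mul hT₀] at h₁
  rw [Real.sqrt_mul (sq_nonneg _), Real.sqrt_sq hT₀] at h₂
  rw [Real.sqrt_mul (aNorm_nonneg _ _), Real.sqrt_sq hS₀] at h₃
  constructor <;> linarith [le_min h₂ h₃]
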